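/- arXiv:1311.4475 — 2 statements merged into one kernel-verified Lean document; each statement's English description precedes it below -/
import Mathlib

section
/- Let p be prime and N ∈ pℕ. The number of 2×N matrices H with entries in the group μ_p of p-th roots of unity, whose first row consists entirely of 1s and whose two rows are orthogonal (Σ_j H_{1j} · conj(H_{2j}) = 0), equals the multinomial coefficient N! / ((N/p)!)^p. If p ∤ N, this number is 0. -/
/-!
A dephased two-row matrix over `μ_p` is determined by its second row `j ↦ ζ ^ k j`, and
orthogonality reads `∑ j, ζ ^ k j = ∑ i, c i * ζ ^ i = 0`, where `c i` is the size of the fibre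
`k ⁻¹' {i}`. Because `Φ_p = 1 + X + ⋯ + X ^ (p - 1)` is the minimal polynomial of `ζ` over `ℚ`,
such a relation forces all `c i` to be equal, i.e. `p ∣ N` and `c i = N / p`. By orbit–stabilizer
for the symmetric group acting on `Fin N → Fin p`, the number of `k` with prescribed fibre sizes
is the multinomial coefficient `N! / ((N / p)!) ^ p`.
-/

open Finset Polynomial

namespace Polynomial

theorem coeff_sum_fin_C_mul_X_pow {R : Type*} [Semiring R] {n : ℕ} (a : Fin n → R) (k : Fin n) :
    (∑ i : Fin n, C (a i) * X ^ (i : ℕ)).coeff k = a k := by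
  simp [Fin.val_inj]

end Polynomial

namespace IsPrimitiveRoot

variable {K : Type*} [Field K] [CharZero K] {p : ℕ} [hp : Fact p.Prime] {ζ : K}

theorem sum_mul_pow_eq_zero_iff (hζ : IsPrimitiveRoot ζ p) (a : Fin p → ℚ) :
    ∑ i, (a i : K) * ζ ^ (i : ℕ) = 0 ↔ ∀ i j, a i = a j := by
  have hcyc : cyclotomic p ℚ = ∑ i : Fin p, C 1 * X ^ (i : ℕ) := by
    simp [cyclotomic_prime, Fin.sum_univ_eq_sum_range (fun i => (X : ℚ[X]) ^ i)]
  constructor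
  · intro h
    set P : ℚ[X] := ∑ i : Fin p, C (a i) * X ^ (i : ℕ)
    have hdvd : cyclotomic p ℚ ∣ P := by
      rw [cyclotomic_eq_minpoly_rat hζ hp.out.pos]
      exact minpoly.dvd ℚ ζ (by simpa [P] using h)
    have hdeg : P.natDegree ≤ (cyclotomic p ℚ).natDegree := by
      rw [natDegree_cyclotomic, Nat.totient_prime hp.out]
      refine natDegree_sum_le_of_forall_le _ _ fun i _ => (natDegree_C_mul_X_pow_le _ _).trans ?_
      omega
    have hP := eq_leadingCoeff_mul_of_monic_of_dvd_of_natDegree_le (cyclotomic.monic p ℚ) hdvd hdeg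
    have hconst : ∀ i, a i = P.leadingCoeff := fun i => calc
      a i = P.coeff i := (coeff_sum_fin_C_mul_X_pow a i).symm
      _ = (C P.leadingCoeff * cyclotomic p ℚ).coeff i := by rw [← hP]
      _ = P.leadingCoeff := by
        rw [coeff_C_mul, hcyc, coeff_sum_fin_C_mul_X_pow (fun _ => 1), mul_one]
    exact fun i j => (hconst i).trans (hconst j).symm
  · intro h
    rw [sum_congr rfl fun i _ => by rw [h i ⟨0, hp.out.pos⟩], ← mul_sum,
      Fin.sum_univ_eq_sum_range (fun i => ζ ^ i), hζ.geom_sum_eq_zero hp.out.one_lt, mul_zero]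

theorem sum_pow_eq_zero_iff_card_fiber {α : Type*} [Fintype α] (hζ : IsPrimitiveRoot ζ p)
    (k : α → Fin p) :
    ∑ a, ζ ^ (k a : ℕ) = 0 ↔ ∀ i, p * Nat.card {a // k a = i} = Nat.card α := by
  classical
  set c : Fin p → ℕ := fun i => Nat.card {a // k a = i}
  have hc : ∀ i, c i = #{a | k a = i} := fun i => by
    simp only [c, Nat.card_eq_fintype_card, Fintype.card_subtype]
  have hsum : ∑ a, ζ ^ (k a : ℕ) = ∑ i, ((c i : ℚ) : K) * ζ ^ (i : ℕ) := by
    rw [← sum_fiberwise univ k]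
    refine sum_congr rfl fun i _ => ?_
    rw [sum_congr rfl fun a ha => by rw [(mem_filter.mp ha).2], sum_const, hc]
    simp
  have htot : ∑ i, c i = Nat.card α := by
    simp only [hc, Nat.card_eq_fintype_card, ← card_univ]
    exact (card_eq_sum_card_fiberwise fun a _ => mem_univ (k a)).symm
  rw [hsum, hζ.sum_mul_pow_eq_zero_iff]
  simp only [Nat.cast_inj]
  constructor
  · intro h i
    rw [← htot, sum_congr rfl fun j _ => h j i, sum_const, card_univ, Fintype.card_fin, smul_eq_mul]
  · intro h i j
    exact Nat.eq_of_mul_eq_mul_left hp.out.pos ((h i).trans (h j).symm)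

end IsPrimitiveRoot

open Equiv MulAction

section FiberCount

variable {α ι : Type*} [Fintype α]

theorem exists_perm_comp_eq_of_card_fiber_eq {f g : α → ι}
    (h : ∀ i, Nat.card {a // g a = i} = Nat.card {a // f a = i}) :
    ∃ σ : Perm α, f ∘ σ = g := by
  let e i := (Finite.card_eq.mp (h i)).some
  refine ⟨(sigmaFiberEquiv g).symm.trans ((sigmaCongrRight e).trans (sigmaFiberEquiv f)), ?_⟩
  funext a
  exact (e (g a) ⟨a, rfl⟩).2

theorem mem_orbit_domMulAct_iff {f g : α → ι} :
    g ∈ orbit (Perm α)ᵈᵐᵃ f ↔ ∀ i, Nat.card {a // g a = i} = Nat.card {a // f a = i} := by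
  constructor
  · rintro ⟨c, rfl⟩ i
    exact Nat.card_congr ((DomMulAct.mk.symm c).subtypeEquiv fun _ => Iff.rfl)
  · intro h
    obtain ⟨σ, rfl⟩ := exists_perm_comp_eq_of_card_fiber_eq h
    exact ⟨DomMulAct.mk σ, rfl⟩

theorem card_fun_card_fiber_eq_mul_prod_factorial [Fintype ι] (f : α → ι) :
    Nat.card {g : α → ι // ∀ i, Nat.card {a // g a = i} = Nat.card {a // f a = i}} *
      ∏ i, (Nat.card {a // f a = i}).factorial = (Fintype.card α).factorial := by
  classical
  have horbit : Nat.card (orbit (Perm α)ᵈᵐᵃ f) =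
      Nat.card {g : α → ι // ∀ i, Nat.card {a // g a = i} = Nat.card {a // f a = i}} :=
    Nat.card_congr (subtypeEquivRight fun _ => mem_orbit_domMulAct_iff)
  have hstab : Nat.card (stabilizer (Perm α)ᵈᵐᵃ f) = ∏ i, (Nat.card {a // f a = i}).factorial := by
    rw [Nat.card_congr (DomMulAct.mk.symm.subtypeEquiv fun _ => DomMulAct.mem_stabilizer_iff :
        stabilizer (Perm α)ᵈᵐᵃ f ≃ {σ : Perm α // f ∘ σ = f}),
      Nat.card_eq_fintype_card, DomMulAct.stabilizer_card]
    simp only [Nat.card_eq_fintype_card]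
  rw [← horbit, ← hstab, ← Nat.card_prod, Nat.card_congr (orbitProdStabilizerEquivGroup _ f),
    Nat.card_congr DomMulAct.mk.symm, Nat.card_perm, Nat.card_eq_fintype_card]

theorem card_fun_card_fiber_eq_multinomial [Fintype ι] (c : ι → ℕ)
    (hc : ∑ i, c i = Fintype.card α) :
    Nat.card {g : α → ι // ∀ i, Nat.card {a // g a = i} = c i} = Nat.multinomial univ c := by
  obtain ⟨e⟩ : Nonempty (α ≃ Σ i, Fin (c i)) := Fintype.card_eq.mp (by simp [hc])
  have hf : ∀ i, Nat.card {a // (e a).1 = i} = c i := fun i => by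
    rw [Nat.card_congr ((e.subtypeEquiv fun _ => Iff.rfl).trans (sigmaSubtype i)), Nat.card_fin]
  have h := card_fun_card_fiber_eq_mul_prod_factorial (fun a => (e a).1)
  simp only [hf, ← hc] at h
  rw [Nat.multinomial, ← h, Nat.mul_div_cancel _ (prod_pos fun i _ => (c i).factorial_pos)]

end FiberCount

theorem card_dephased_orthogonal_eq_card_sum_pow_eq_zero {ι : Type*} [Fintype ι] {p : ℕ}
    [NeZero p] {ζ : ℂ} (hζ : IsPrimitiveRoot ζ p) :
    Nat.card {H : Matrix (Fin 2) ι ℂ //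
        (∀ i j, H i j ^ p = 1) ∧ (∀ j, H 0 j = 1) ∧ ∑ j, H 0 j * starRingEnd ℂ (H 1 j) = 0} =
      Nat.card {k : ι → Fin p // ∑ j, ζ ^ (k j : ℕ) = 0} := by
  have horth : ∀ w : ι → ℂ, ∑ j, 1 * starRingEnd ℂ (w j) = 0 ↔ ∑ j, w j = 0 := fun w => by
    simp only [one_mul, ← map_sum, map_eq_zero]
  have hroot : ∀ i : ℕ, (ζ ^ i) ^ p = 1 := fun i => by
    rw [← pow_mul, mul_comm, pow_mul, hζ.pow_eq_one, one_pow]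
  symm
  refine Nat.card_eq_of_bijective
    (fun k => ⟨Matrix.of ![1, fun j => ζ ^ (k.1 j : ℕ)], ?_, fun _ => rfl, (horth _).mpr k.2⟩)
    ⟨fun k l hkl => ?_, fun H => ?_⟩
  · intro i j
    fin_cases i
    · exact one_pow p
    · exact hroot _
  · exact Subtype.ext <| funext fun j => Fin.ext <| hζ.pow_inj (k.1 j).2 (l.1 j).2
      (congrFun (congrFun (congrArg Subtype.val hkl) 1) j)
  · obtain ⟨H, hroots, hdephased, hsum⟩ := H
    choose i hi hζi using fun j => hζ.eq_pow_of_pow_eq_one (hroots 1 j)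
    refine ⟨⟨fun j => ⟨i j, hi j⟩, ?_⟩, ?_⟩
    · simp only [hζi]
      rw [← horth]
      simpa only [hdephased] using hsum
    · ext r j
      fin_cases r
      · exact (hdephased j).symm
      · exact hζi j

theorem stmt_5 (p N : ℕ) (hp : p.Prime) :
    (p ∣ N →
      Nat.card {H : Matrix (Fin 2) (Fin N) ℂ //
          (∀ i j, H i j ^ p = 1) ∧ (∀ j, H 0 j = 1) ∧
          ∑ j, H 0 j * (starRingEnd ℂ) (H 1 j) = 0} =
        N.factorial / (N / p).factorial ^ p) ∧
    (¬ p ∣ N →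
      Nat.card {H : Matrix (Fin 2) (Fin N) ℂ //
          (∀ i j, H i j ^ p = 1) ∧ (∀ j, H 0 j = 1) ∧
          ∑ j, H 0 j * (starRingEnd ℂ) (H 1 j) = 0} = 0) := by
  have := Fact.mk hp
  have hζ := Complex.isPrimitiveRoot_exp p hp.ne_zero
  simp only [card_dephased_orthogonal_eq_card_sum_pow_eq_zero hζ,
    hζ.sum_pow_eq_zero_iff_card_fiber, Nat.card_fin]
  refine ⟨?_, fun hndvd => Nat.card_eq_zero.mpr (.inl ⟨fun k => hndvd ⟨_, (k.2 ⟨0, hp.pos⟩).symm⟩⟩)⟩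
  rintro ⟨m, rfl⟩
  simp only [Nat.mul_left_cancel_iff hp.pos, Nat.mul_div_cancel_left m hp.pos]
  rw [card_fun_card_fiber_eq_multinomial _ (by simp), Nat.multinomial]
  simp
end

section
/- Let p be prime, w = e^{2πi/p}, and N ∈ pℕ. A 3×N matrix H over μ_p whose first row is all 1s, whose second row contains each value w^i exactly N/p times grouped in blocks, and whose entries are encoded by a multiplicity matrix A ∈ M_p(ℕ) (where A_{ij} is the number of columns with second entry w^{i-1} and third entry w^{j-1}) has pairwise orthogonal rows if and only if A is tristochastic with common sum N/p, i.e., every row sum, every column sum, and every diagonal sum Σ_i A_{i, i+d} (indices mod p, for each d ∈ ℤ/p) equals N/p. -/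
/-!
Write the second and third rows as `w ^ α` and `w ^ β` with `α β : Fin N → ZMod p`. The three
orthogonality relations say that `∑ w ^ α`, `∑ w ^ β` and `∑ w ^ (β - α)` vanish. As the minimal
polynomial of `w` over `ℚ` is `1 + X + ⋯ + X ^ (p - 1)`, a rational combination `∑ c_r w ^ r`
vanishes iff all `c_r` are equal, so each of these sums vanishes iff every residue is taken
`N / p` times by the exponent. These fibre sizes are the row, column and diagonal sums of `A`.
-/

open Finset Polynomial

section JointCount

variable {ι R : Type*} [Fintype ι] [DecidableEq R]

def jointCount (α β : ι → R) (i j : R) : ℕ := #{k | α k = i ∧ β k = j}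

variable [Fintype R]

theorem Finset.sum_card_filter_and_eq (P : ι → Prop) [DecidablePred P] (f : ι → R) :
    ∑ r, #{k | P k ∧ f k = r} = #{k | P k} := by
  simp only [← filter_filter, sum_card_fiberwise_eq_card_filter, mem_univ, filter_true_of_mem,
    implies_true]

theorem sum_jointCount_right (α β : ι → R) (i : R) :
    ∑ j, jointCount α β i j = #{k | α k = i} :=
  sum_card_filter_and_eq _ β

theorem sum_jointCount_left (α β : ι → R) (j : R) :
    ∑ i, jointCount α β i j = #{k | β k = j} := by
  simp only [jointCount, and_comm (a := α _ = _), sum_card_filter_and_eq]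

theorem sum_jointCount_add_right [AddCommGroup R] (α β : ι → R) (d : R) :
    ∑ i, jointCount α β i (i + d) = #{k | β k - α k = d} := by
  have (k : ι) (i : R) : α k = i ∧ β k = i + d ↔ β k - α k = d ∧ α k = i := by
    constructor
    · rintro ⟨rfl, h⟩; simp [h]
    · rintro ⟨h, rfl⟩; simp [← h]
  simp only [jointCount, this, sum_card_filter_and_eq]

end JointCount

namespace IsPrimitiveRoot

section Field

variable {K : Type*} [Field K] {n : ℕ} [NeZero n] {ζ : K}

theorem exists_eq_pow_val (hζ : IsPrimitiveRoot ζ n) {ξ : K} (hξ : ξ ^ n = 1) :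
    ∃ r : ZMod n, ξ = ζ ^ r.val := by
  obtain ⟨i, hi, rfl⟩ := hζ.eq_pow_of_pow_eq_one hξ
  exact ⟨i, by rw [ZMod.val_cast_of_lt hi]⟩

theorem pow_val_inj (hζ : IsPrimitiveRoot ζ n) {r s : ZMod n} :
    ζ ^ r.val = ζ ^ s.val ↔ r = s :=
  ⟨fun h ↦ ZMod.val_injective n (hζ.pow_inj r.val_lt s.val_lt h), fun h ↦ h ▸ rfl⟩

theorem sum_pow_val_eq_zero (hζ : IsPrimitiveRoot ζ n) (hn : 1 < n) :
    ∑ r : ZMod n, ζ ^ r.val = 0 := by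
  have : Fact (1 < n) := ⟨hn⟩
  refine AddChar.sum_eq_zero_of_ne_one (ψ := AddChar.zmodChar n hζ.pow_eq_one) ?_
  rw [AddChar.ne_one_iff]
  exact ⟨1, by rw [AddChar.zmodChar_apply, ZMod.val_one, pow_one]; exact hζ.ne_one hn⟩

end Field

section Prime

variable {K : Type*} [Field K] [CharZero K] {p : ℕ} [Fact p.Prime] {ζ : K}

theorem sum_mul_pow_val_eq_zero_iff (hζ : IsPrimitiveRoot ζ p) (c : ZMod p → ℚ) :
    ∑ r, (c r : K) * ζ ^ r.val = 0 ↔ ∀ r, c r = c 0 := by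
  have hp := (Fact.out : p.Prime)
  let P : ℚ[X] := ∑ r, C (c r) * X ^ r.val
  have hP_coeff (r : ZMod p) : P.coeff r.val = c r := by
    simp only [P, finsetSum_coeff, coeff_C_mul_X_pow]
    rw [Finset.sum_eq_single r (fun s _ hs ↦ if_neg fun h ↦ hs (ZMod.val_injective p h).symm)
      (by simp)]
    simp
  constructor
  · intro h
    have hdvd : cyclotomic p ℚ ∣ P := by
      rw [cyclotomic_eq_minpoly_rat hζ hp.pos]
      exact minpoly.dvd ℚ ζ (by simpa [P] using h)
    have hdeg : P.natDegree ≤ (cyclotomic p ℚ).natDegree := by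
      rw [natDegree_cyclotomic, Nat.totient_prime hp]
      refine natDegree_sum_le_of_forall_le _ _ fun r _ ↦ (natDegree_C_mul_X_pow_le _ _).trans ?_
      have := r.val_lt
      omega
    obtain ⟨k, hP⟩ : ∃ k, P = C k * cyclotomic p ℚ :=
      ⟨_, eq_leadingCoeff_mul_of_monic_of_dvd_of_natDegree_le (cyclotomic.monic p ℚ) hdvd hdeg⟩
    have hc (r : ZMod p) : c r = k := by
      rw [← hP_coeff, hP, coeff_C_mul, cyclotomic_prime, finsetSum_coeff,
        sum_eq_single_of_mem _ (mem_range.2 r.val_lt) fun i _ hi ↦ by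
          rw [coeff_X_pow, if_neg hi.symm]]
      simp
    exact fun r ↦ (hc r).trans (hc 0).symm
  · intro h
    simp only [h, ← Finset.mul_sum, hζ.sum_pow_val_eq_zero hp.one_lt, mul_zero]

variable {ι : Type*} [Fintype ι]

theorem sum_pow_val_comp_eq_zero_iff (hζ : IsPrimitiveRoot ζ p) (e : ι → ZMod p) :
    ∑ k, ζ ^ (e k).val = 0 ↔ ∀ r, #{k | e k = r} = Fintype.card ι / p := by
  have hp := (Fact.out : p.Prime)
  have hsum : ∑ k, ζ ^ (e k).val = ∑ r, ((#{k | e k = r} : ℚ) : K) * ζ ^ r.val := by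
    rw [← Finset.sum_fiberwise' univ e fun r ↦ ζ ^ r.val]
    simp only [sum_const, nsmul_eq_mul, Rat.cast_natCast]
  have hcard : ∑ r, #{k | e k = r} = Fintype.card ι :=
    (card_eq_sum_card_fiberwise fun k _ ↦ mem_univ (e k)).symm
  rw [hsum, hζ.sum_mul_pow_val_eq_zero_iff]
  constructor
  · intro h r
    have h' (s : ZMod p) : #{k | e k = s} = #{k | e k = 0} := by exact_mod_cast h s
    rw [← hcard, Finset.sum_congr rfl fun s _ ↦ h' s, sum_const, card_univ, ZMod.card, smul_eq_mul,
      Nat.mul_div_cancel_left _ hp.pos, h']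
  · intro h r
    rw [h r, h 0]

theorem sum_pow_val_eq_zero_iff_jointCount (hζ : IsPrimitiveRoot ζ p) (α β : ι → ZMod p) :
    (∑ k, ζ ^ (α k).val = 0 ∧ ∑ k, ζ ^ (β k).val = 0 ∧ ∑ k, ζ ^ (β k - α k).val = 0) ↔
      ((∀ i, ∑ j, jointCount α β i j = Fintype.card ι / p) ∧
        (∀ j, ∑ i, jointCount α β i j = Fintype.card ι / p) ∧
        ∀ d, ∑ i, jointCount α β i (i + d) = Fintype.card ι / p) := by
  simp only [sum_jointCount_right, sum_jointCount_left, sum_jointCount_add_right,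
    hζ.sum_pow_val_comp_eq_zero_iff]

end Prime

end IsPrimitiveRoot

theorem Complex.pow_val_mul_conj_pow_val {n : ℕ} [NeZero n] {ζ : ℂ} (hζ : ζ ^ n = 1)
    (r s : ZMod n) : ζ ^ r.val * (starRingEnd ℂ) (ζ ^ s.val) = ζ ^ (r - s).val := by
  simp only [← AddChar.zmodChar_apply hζ, ← AddChar.map_neg_eq_conj, ← AddChar.map_add_eq_mul,
    sub_eq_add_neg]

theorem Matrix.orthogonal_rows_fin_three_iff {S n : Type*} [CommSemiring S] [StarRing S]
    [Fintype n] (H : Matrix (Fin 3) n S) :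
    (∀ i₁ i₂ : Fin 3, i₁ ≠ i₂ → ∑ k, H i₁ k * starRingEnd S (H i₂ k) = 0) ↔
      (∑ k, H 1 k * starRingEnd S (H 0 k) = 0 ∧ ∑ k, H 2 k * starRingEnd S (H 0 k) = 0 ∧
        ∑ k, H 2 k * starRingEnd S (H 1 k) = 0) := by
  have hsymm {i j : Fin 3} (h : ∑ k, H i k * starRingEnd S (H j k) = 0) :
      ∑ k, H j k * starRingEnd S (H i k) = 0 := by
    have : ∑ k, H j k * starRingEnd S (H i k) =
        starRingEnd S (∑ k, H i k * starRingEnd S (H j k)) := by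
      simp only [map_sum, map_mul, starRingEnd_self_apply, mul_comm]
    rw [this, h, map_zero]
  refine ⟨fun h ↦ ⟨h 1 0 (by decide), h 2 0 (by decide), h 2 1 (by decide)⟩, ?_⟩
  rintro ⟨h10, h20, h21⟩ i j hij
  fin_cases i <;> fin_cases j <;>
    first | exact absurd rfl hij | assumption | exact hsymm (by assumption)

theorem stmt_12_general (p N : ℕ) [NeZero p] (hp : p.Prime)
    (w : ℂ) (hw : w = Complex.exp (2 * Real.pi * Complex.I / p))
    (H : Matrix (Fin 3) (Fin N) ℂ) (hroot : ∀ i j, H i j ^ p = 1)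
    (h0 : ∀ j, H 0 j = 1)
    (A : ZMod p → ZMod p → ℕ)
    (hA : ∀ i j : ZMod p,
      A i j = Nat.card {k : Fin N // H 1 k = w ^ i.val ∧ H 2 k = w ^ j.val}) :
    (∀ i₁ i₂ : Fin 3, i₁ ≠ i₂ → ∑ k, H i₁ k * (starRingEnd ℂ) (H i₂ k) = 0) ↔
      ((∀ i : ZMod p, ∑ j, A i j = N / p) ∧
       (∀ j : ZMod p, ∑ i, A i j = N / p) ∧
       (∀ d : ZMod p, ∑ i, A i (i + d) = N / p)) := by
  have : Fact p.Prime := ⟨hp⟩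
  have hw' : IsPrimitiveRoot w p := hw ▸ Complex.isPrimitiveRoot_exp p (NeZero.ne p)
  choose e he using fun i k ↦ hw'.exists_eq_pow_val (hroot i k)
  have hA' : A = jointCount (e 1) (e 2) := by
    ext i j
    rw [hA, Nat.card_eq_fintype_card, Fintype.card_subtype]
    simp only [he, hw'.pow_val_inj]
    rfl
  rw [Matrix.orthogonal_rows_fin_three_iff, hA']
  simpa only [h0, he 1, he 2, map_one, mul_one, Complex.pow_val_mul_conj_pow_val hw'.pow_eq_one,
    Fintype.card_fin] using hw'.sum_pow_val_eq_zero_iff_jointCount (e 1) (e 2)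

theorem stmt_12 (p N : ℕ) [NeZero p] (hp : p.Prime) (hN : p ∣ N)
    (w : ℂ) (hw : w = Complex.exp (2 * Real.pi * Complex.I / p))
    (H : Matrix (Fin 3) (Fin N) ℂ) (hroot : ∀ i j, H i j ^ p = 1)
    (h0 : ∀ j, H 0 j = 1)
    (A : ZMod p → ZMod p → ℕ)
    (hA : ∀ i j : ZMod p,
      A i j = Nat.card {k : Fin N // H 1 k = w ^ i.val ∧ H 2 k = w ^ j.val}) :
    (∀ i₁ i₂ : Fin 3, i₁ ≠ i₂ → ∑ k, H i₁ k * (starRingEnd ℂ) (H i₂ k) = 0) ↔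
      ((∀ i : ZMod p, ∑ j, A i j = N / p) ∧
       (∀ j : ZMod p, ∑ i, A i j = N / p) ∧
       (∀ d : ZMod p, ∑ i, A i (i + d) = N / p)) :=
  stmt_12_general p N hp w hw H hroot h0 A hA
end
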